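/- If I is a componentwise polymatroidal monomial ideal in S, then ∂(I) is componentwise polymatroidal. -/

import Mathlib

open MvPolynomial

noncomputable section

/-- The polynomial ring `S = K[x_1,…,x_n]`. -/
abbrev MPoly (K : Type) [Field K] (n : ℕ) : Type := MvPolynomial (Fin n) K

/-- The degree of the monomial `x^a`. -/
def mdeg {n : ℕ} (a : Fin n →₀ ℕ) : ℕ := ∑ i, a i

/-- `I` is a monomial ideal: it is generated by monomials. -/
def IsMonomialIdeal {K : Type} [Field K] {n : ℕ} (I : Ideal (MPoly K n)) : Prop :=
  ∃ M : Set (Fin n →₀ ℕ),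
    I = Ideal.span ((fun a => (monomial a (1 : K) : MPoly K n)) '' M)

/-- The exponents of the minimal monomial generating set `G(I)` of a monomial
ideal `I`: monomials in `I` no proper monomial divisor of which lies in `I`. -/
def minGens {K : Type} [Field K] {n : ℕ} (I : Ideal (MPoly K n)) : Set (Fin n →₀ ℕ) :=
  { a | (monomial a (1 : K) : MPoly K n) ∈ I ∧
      ∀ b : Fin n →₀ ℕ, b ≤ a → b ≠ a → (monomial b (1 : K) : MPoly K n) ∉ I }

/-- The gradient ideal `∂(I) = (u/x_i : u ∈ G(I), i ∈ supp u)` of a monomial ideal. -/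
def gradIdeal {K : Type} [Field K] {n : ℕ} (I : Ideal (MPoly K n)) : Ideal (MPoly K n) :=
  Ideal.span { q | ∃ a ∈ minGens I, ∃ i : Fin n, a i ≠ 0 ∧
      q = (monomial (a - Finsupp.single i 1) (1 : K) : MPoly K n) }

/-- `α(I)`: the minimal degree of a minimal monomial generator of `I`. -/
def alphaDeg {K : Type} [Field K] {n : ℕ} (I : Ideal (MPoly K n)) : ℕ :=
  sInf (mdeg '' minGens I)

/-- A minimal graded free resolution of the ideal `I` as an `S`-module:
free modules `F i = S^{b i}` with generator degrees `dg i`, graded differentials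
and augmentation, exactness, and minimality (entries of the differentials have
vanishing constant term). -/
structure MinFreeRes {K : Type} [Field K] {n : ℕ} (I : Ideal (MPoly K n)) where
  b : ℕ → ℕ
  dg : ∀ i : ℕ, Fin (b i) → ℕ
  diff : ∀ i : ℕ, (Fin (b (i + 1)) → MPoly K n) →ₗ[MPoly K n] (Fin (b i) → MPoly K n)
  aug : (Fin (b 0) → MPoly K n) →ₗ[MPoly K n] MPoly K n
  aug_hom : ∀ k, (aug (Pi.single k 1)).IsHomogeneous (dg 0 k)
  aug_range : LinearMap.range aug = I
  diff_hom : ∀ i k l, ((diff i (Pi.single k 1)) l).IsHomogeneous (dg (i + 1) k - dg i l)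
  minimal : ∀ i k l, constantCoeff ((diff i (Pi.single k 1)) l) = 0
  exact_zero : LinearMap.range (diff 0) = LinearMap.ker aug
  exact_succ : ∀ i, LinearMap.range (diff (i + 1)) = LinearMap.ker (diff i)

/-- The Castelnuovo–Mumford regularity read off from a minimal graded free
resolution: `reg = max { j - i : β_{i,j} ≠ 0 }`. -/
def MinFreeRes.reg {K : Type} [Field K] {n : ℕ} {I : Ideal (MPoly K n)}
    (R : MinFreeRes I) : ℕ :=
  sSup { m | ∃ i k, R.dg i k - i = m }

/-- `I` has a `d`-linear resolution: its minimal free resolution has all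
`i`-th syzygies generated in degree `d + i`. -/
def HasLinearRes {K : Type} [Field K] {n : ℕ} (I : Ideal (MPoly K n)) (d : ℕ) : Prop :=
  ∃ R : MinFreeRes I, ∀ i k, R.dg i k = d + i

/-- `I_{⟨j⟩}`: the ideal generated by the homogeneous elements of degree `j` in `I`. -/
def componentIdeal {K : Type} [Field K] {n : ℕ} (I : Ideal (MPoly K n)) (j : ℕ) :
    Ideal (MPoly K n) :=
  Ideal.span { p | p ∈ I ∧ p.IsHomogeneous j }

/-- A monomial ideal is polymatroidal if it is generated in a single degree and
the exponent vectors of its minimal generators satisfy the exchange property,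
i.e. they form the set of bases of a discrete polymatroid. -/
def IsPolymatroidal {K : Type} [Field K] {n : ℕ} (I : Ideal (MPoly K n)) : Prop :=
  IsMonomialIdeal I ∧
  (∃ d : ℕ, ∀ a ∈ minGens I, mdeg a = d) ∧
  (∀ u ∈ minGens I, ∀ v ∈ minGens I, ∀ i : Fin n, v i < u i →
    ∃ j : Fin n, u j < v j ∧
      (u - Finsupp.single i 1 + Finsupp.single j 1) ∈ minGens I)

section Stmt13Aux

open Finsupp in
private lemma mdeg_mono' {n : ℕ} {a b : Fin n →₀ ℕ} (h : a ≤ b) : mdeg a ≤ mdeg b :=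
  Finset.sum_le_sum fun i _ => Finsupp.le_def.mp h i

private lemma eq_of_le_of_mdeg_le {n : ℕ} {a b : Fin n →₀ ℕ} (h : a ≤ b)
    (hd : mdeg b ≤ mdeg a) : a = b := by
  by_contra hne
  have hex : ∃ i, a i < b i := by
    by_contra hno; push_neg at hno
    exact hne (Finsupp.ext fun i => le_antisymm (Finsupp.le_def.mp h i) (hno i))
  obtain ⟨i, hi⟩ := hex
  have : mdeg a < mdeg b :=
    Finset.sum_lt_sum (fun j _ => Finsupp.le_def.mp h j) ⟨i, Finset.mem_univ i, hi⟩
  omega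

private lemma mdeg_add' {n : ℕ} (a b : Fin n →₀ ℕ) : mdeg (a + b) = mdeg a + mdeg b := by
  simp [mdeg, Finsupp.add_apply, Finset.sum_add_distrib]

private lemma mdeg_single' {n : ℕ} (i : Fin n) : mdeg (Finsupp.single i 1) = 1 := by
  simp [mdeg, Finsupp.single_apply]

private lemma single_le' {n : ℕ} {b : Fin n →₀ ℕ} {i : Fin n} (h : b i ≠ 0) :
    Finsupp.single i 1 ≤ b :=
  Finsupp.single_le_iff.mpr (Nat.one_le_iff_ne_zero.mpr h)

private lemma sub_single_add' {n : ℕ} {b : Fin n →₀ ℕ} {i : Fin n} (h : b i ≠ 0) :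
    b - Finsupp.single i 1 + Finsupp.single i 1 = b :=
  tsub_add_cancel_of_le (single_le' h)

private lemma mdeg_sub_single' {n : ℕ} {b : Fin n →₀ ℕ} {i : Fin n} (h : b i ≠ 0) :
    mdeg (b - Finsupp.single i 1) + 1 = mdeg b := by
  conv_rhs => rw [← sub_single_add' h]
  rw [mdeg_add', mdeg_single']

private lemma apply_le_mdeg {n : ℕ} (b : Fin n →₀ ℕ) (i : Fin n) : b i ≤ mdeg b :=
  Finset.single_le_sum (f := fun j => b j) (fun j _ => Nat.zero_le _) (Finset.mem_univ i)

private lemma eq_single_of_mdeg_one {n : ℕ} {δ : Fin n →₀ ℕ} (h : mdeg δ = 1) :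
    ∃ r, δ = Finsupp.single r 1 := by
  obtain ⟨r, hr⟩ : ∃ r, δ r ≠ 0 := by
    by_contra hc; push_neg at hc
    simp only [mdeg] at h
    rw [Finset.sum_eq_zero (fun i _ => hc i)] at h
    omega
  refine ⟨r, ?_⟩
  have h1 : δ r = 1 := by have := apply_le_mdeg δ r; omega
  have hsplit : δ r + ∑ j ∈ Finset.univ.erase r, δ j = mdeg δ :=
    Finset.add_sum_erase _ _ (Finset.mem_univ r)
  have hz : ∑ j ∈ Finset.univ.erase r, δ j = 0 := by omega
  ext i
  rcases eq_or_ne i r with rfl | hi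
  · simp [h1]
  · have : δ i = 0 :=
      Finset.sum_eq_zero_iff.mp hz i (Finset.mem_erase.mpr ⟨hi, Finset.mem_univ i⟩)
    rw [this, Finsupp.single_eq_of_ne' (Ne.symm hi)]

private lemma exists_eq_add_single {n : ℕ} {z c : Fin n →₀ ℕ} (hzc : z ≤ c)
    (hd : mdeg z + 1 = mdeg c) : ∃ r, c = z + Finsupp.single r 1 := by
  have h1 : z + (c - z) = c := add_tsub_cancel_of_le hzc
  have h2 : mdeg (c - z) = 1 := by
    have := mdeg_add' z (c - z); rw [h1] at this; omega
  obtain ⟨r, hr⟩ := eq_single_of_mdeg_one h2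
  exact ⟨r, by rw [← h1, hr]⟩

/-- The exchange property for a set of exponent vectors. -/
private def Exch {n : ℕ} (B : Set (Fin n →₀ ℕ)) : Prop :=
  ∀ u ∈ B, ∀ v ∈ B, ∀ i : Fin n, v i < u i →
    ∃ j : Fin n, u j < v j ∧ (u - Finsupp.single i 1 + Finsupp.single j 1) ∈ B

/-- Augmentation lemma: descent on `∑ (b - b')`. -/
private lemma aug {n : ℕ} {B : Set (Fin n →₀ ℕ)} {d : ℕ} (hdeg : ∀ b ∈ B, mdeg b = d)
    (hex : Exch B) {x y : Fin n →₀ ℕ} (hxy : mdeg x < mdeg y) :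
    ∀ N : ℕ, ∀ b b' : Fin n →₀ ℕ, (∑ s, (b s - b' s)) ≤ N → b ∈ B → b' ∈ B → x ≤ b → y ≤ b' →
      ∃ t, x t < y t ∧ ∃ c ∈ B, x + Finsupp.single t 1 ≤ c := by
  intro N
  induction N using Nat.strong_induction_on with
  | _ N IH =>
  intro b b' hN hb hb' hxb hyb'
  by_cases hA : ∃ t, x t < y t ∧ x t < b t
  · obtain ⟨t, h1, h2⟩ := hA
    refine ⟨t, h1, b, hb, ?_⟩
    rw [Finsupp.le_def]; intro s
    rw [Finsupp.add_apply, Finsupp.single_apply]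
    have := Finsupp.le_def.mp hxb s
    rcases eq_or_ne t s with rfl | hts
    · simp; omega
    · simp [hts]; omega
  push_neg at hA
  have H1 : ∀ t, x t < y t → b t = x t := by
    intro t ht
    have := hA t ht
    have := Finsupp.le_def.mp hxb t
    omega
  by_cases hB : ∃ i, b' i < b i ∧ x i < b i
  · obtain ⟨i, hi1, hi2⟩ := hB
    obtain ⟨t, ht1, htB⟩ := hex b hb b' hb' i hi1
    have hti : t ≠ i := by intro h; rw [h] at ht1; omega
    set c₁ : Fin n →₀ ℕ := b - Finsupp.single i 1 + Finsupp.single t 1 with hc₁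
    have hcs : ∀ s, c₁ s = b s - (if i = s then 1 else 0) + (if t = s then 1 else 0) := by
      intro s
      rw [hc₁, Finsupp.add_apply, Finsupp.tsub_apply, Finsupp.single_apply, Finsupp.single_apply]
    have hΦ : (∑ s, (c₁ s - b' s)) < ∑ s, (b s - b' s) := by
      apply Finset.sum_lt_sum
      · intro s _
        have hc := hcs s
        split_ifs at hc with h1 h2 h2
        · exact absurd (h2.trans h1.symm) hti
        · have hbi := h1 ▸ hi1
          omega
        · have hbt := h2 ▸ ht1
          omega
        · omega
      · refine ⟨i, Finset.mem_univ i, ?_⟩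
        have hc := hcs i
        rw [if_pos rfl, if_neg hti] at hc
        omega
    have hxc : x ≤ c₁ := by
      rw [Finsupp.le_def]; intro s
      have hc := hcs s
      have hxs := Finsupp.le_def.mp hxb s
      split_ifs at hc with h1 h2 h2
      · exact absurd (h2.trans h1.symm) hti
      · have hbi := h1 ▸ hi2
        omega
      · omega
      · omega
    exact IH _ (lt_of_lt_of_le hΦ hN) _ b' le_rfl htB hb' hxc hyb'
  push_neg at hB
  have H2 : ∀ i, b' i < b i → b i = x i := by
    intro i hi
    have := hB i hi
    have := Finsupp.le_def.mp hxb i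
    omega
  by_cases hC : ∃ t, b t < b' t ∧ y t < b' t
  · obtain ⟨t, ht1, ht2⟩ := hC
    obtain ⟨s₀, hs1, hsB⟩ := hex b' hb' b hb t ht1
    have hst : s₀ ≠ t := by intro h; rw [h] at hs1; omega
    set c₂ : Fin n →₀ ℕ := b' - Finsupp.single t 1 + Finsupp.single s₀ 1 with hc₂
    have hcs : ∀ s, c₂ s = b' s - (if t = s then 1 else 0) + (if s₀ = s then 1 else 0) := by
      intro s
      rw [hc₂, Finsupp.add_apply, Finsupp.tsub_apply, Finsupp.single_apply, Finsupp.single_apply]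
    have hΦ : (∑ s, (b s - c₂ s)) < ∑ s, (b s - b' s) := by
      apply Finset.sum_lt_sum
      · intro s _
        have hc := hcs s
        split_ifs at hc with h1 h2 h2
        · exact absurd (h2.trans h1.symm) hst
        · have hbt := h1 ▸ ht1
          omega
        · have hbs := h2 ▸ hs1
          omega
        · omega
      · refine ⟨s₀, Finset.mem_univ s₀, ?_⟩
        have hc := hcs s₀
        rw [if_pos rfl, if_neg (Ne.symm hst)] at hc
        omega
    have hyc : y ≤ c₂ := by
      rw [Finsupp.le_def]; intro s
      have hc := hcs s
      have hys := Finsupp.le_def.mp hyb' s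
      split_ifs at hc with h1 h2 h2
      · exact absurd (h2.trans h1.symm) hst
      · have hbt := h1 ▸ ht2
        omega
      · omega
      · omega
    exact IH _ (lt_of_lt_of_le hΦ hN) b _ le_rfl hb hsB hxb hyc
  push_neg at hC
  have H3 : ∀ t, b t < b' t → b' t = y t := by
    intro t ht
    have := hC t ht
    have := Finsupp.le_def.mp hyb' t
    omega
  exfalso
  have key : ∀ t, y t + (b t - b' t) ≤ x t + (b' t - b t) := by
    intro t
    have hxt := Finsupp.le_def.mp hxb t
    have hyt := Finsupp.le_def.mp hyb' t
    rcases lt_trichotomy (b t) (b' t) with h | h | h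
    · have h3 := H3 t h
      have h1 := H1 t (by omega)
      omega
    · by_cases hxy' : x t < y t
      · have h1 := H1 t hxy'; omega
      · omega
    · have h2 := H2 t h; omega
  have hsum : mdeg y + (∑ t, (b t - b' t)) ≤ mdeg x + ∑ t, (b' t - b t) := by
    rw [mdeg, mdeg, ← Finset.sum_add_distrib, ← Finset.sum_add_distrib]
    exact Finset.sum_le_sum fun t _ => key t
  have heq : (∑ t, (b t - b' t)) + mdeg b' = (∑ t, (b' t - b t)) + mdeg b := by
    rw [mdeg, mdeg, ← Finset.sum_add_distrib, ← Finset.sum_add_distrib]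
    exact Finset.sum_congr rfl fun t _ => by omega
  have hbd : mdeg b = d := hdeg b hb
  have hbd' : mdeg b' = d := hdeg b' hb'
  omega

/-- The shadow of a set of exponent vectors. -/
private def shadow {n : ℕ} (B : Set (Fin n →₀ ℕ)) : Set (Fin n →₀ ℕ) :=
  {c | ∃ b ∈ B, ∃ p, b p ≠ 0 ∧ c = b - Finsupp.single p 1}

private lemma shadow_exch {n : ℕ} {B : Set (Fin n →₀ ℕ)} {d : ℕ}
    (hdeg : ∀ b ∈ B, mdeg b = d) (hex : Exch B) : Exch (shadow B) := by
  intro u hu v hv i hiv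
  obtain ⟨b, hb, p, hp, hue⟩ := hu
  obtain ⟨b', hb', q, hq, hve⟩ := hv
  have hub : u ≤ b := by rw [hue]; exact tsub_le_self
  have hvb' : v ≤ b' := by rw [hve]; exact tsub_le_self
  have hui : u i ≠ 0 := by omega
  have hdu : mdeg u + 1 = d := by rw [hue, mdeg_sub_single' hp]; exact hdeg b hb
  have hdv : mdeg v + 1 = d := by rw [hve, mdeg_sub_single' hq]; exact hdeg b' hb'
  set w : Fin n →₀ ℕ := u - Finsupp.single i 1 with hw
  have hdw : mdeg w + 1 = mdeg u := mdeg_sub_single' hui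
  have hwv : mdeg w < mdeg v := by omega
  have hwb : w ≤ b := le_trans tsub_le_self hub
  obtain ⟨t, hwt, c, hc, hwc⟩ :=
    aug hdeg hex hwv (∑ s, (b s - b' s)) b b' le_rfl hb hb' hwb hvb'
  have hwi : w i = u i - 1 := by
    rw [hw, Finsupp.tsub_apply, Finsupp.single_eq_same]
  have hti : t ≠ i := by
    intro h; rw [h, hwi] at hwt; omega
  have hwt' : w t = u t := by
    rw [hw, Finsupp.tsub_apply, Finsupp.single_eq_of_ne' (Ne.symm hti), Nat.sub_zero]
  refine ⟨t, by rw [hwt'] at hwt; exact hwt, ?_⟩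
  have hdz : mdeg (w + Finsupp.single t 1) + 1 = mdeg c := by
    rw [mdeg_add', mdeg_single', hdeg c hc]; omega
  obtain ⟨r, hr⟩ := exists_eq_add_single hwc hdz
  refine ⟨c, hc, r, ?_, ?_⟩
  · rw [hr, Finsupp.add_apply, Finsupp.single_eq_same]; omega
  · rw [hr, add_tsub_cancel_right]

end Stmt13Aux

section Stmt13Aux2

variable {K : Type} [Field K] {n : ℕ}

/-- The span of the monomials with exponents in `M`. -/
private abbrev msp (M : Set (Fin n →₀ ℕ)) : Ideal (MPoly K n) :=
  Ideal.span ((fun a => (monomial a (1 : K) : MPoly K n)) '' M)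

private lemma mono_mem_msp {M : Set (Fin n →₀ ℕ)} {c : Fin n →₀ ℕ} :
    (monomial c (1 : K) : MPoly K n) ∈ msp M ↔ ∃ m ∈ M, m ≤ c := by
  classical
  rw [msp, mem_ideal_span_monomial_image]
  constructor
  · intro h
    exact h c (by rw [support_monomial, if_neg one_ne_zero]; exact Finset.mem_singleton_self c)
  · intro h xi hxi
    rw [support_monomial, if_neg one_ne_zero, Finset.mem_singleton] at hxi
    exact hxi ▸ h

private lemma mdeg_eq_degree (a : Fin n →₀ ℕ) : mdeg a = a.degree :=
  (Finset.sum_subset (Finset.subset_univ _)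
    (fun i _ hi => Finsupp.notMem_support_iff.mp hi)).symm

private lemma mdeg_of_mem_support {p : MPoly K n} {j : ℕ} (hp : p.IsHomogeneous j)
    {c : Fin n →₀ ℕ} (hc : c ∈ p.support) : mdeg c = j := by
  rw [mdeg_eq_degree, Finsupp.degree_eq_weight_one]
  exact hp (MvPolynomial.mem_support_iff.mp hc)

private lemma componentIdeal_msp (M : Set (Fin n →₀ ℕ)) (j : ℕ) :
    componentIdeal (msp (K := K) M) j = msp {c | mdeg c = j ∧ ∃ m ∈ M, m ≤ c} := by
  apply le_antisymm
  · rw [componentIdeal, Ideal.span_le]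
    rintro p ⟨hpI, hph⟩
    rw [SetLike.mem_coe, msp, mem_ideal_span_monomial_image]
    intro c hc
    refine ⟨c, ⟨mdeg_of_mem_support hph hc, ?_⟩, le_rfl⟩
    rw [msp, mem_ideal_span_monomial_image] at hpI
    exact hpI c hc
  · rw [msp, Ideal.span_le]
    rintro q ⟨c, ⟨hdc, m, hm, hmc⟩, rfl⟩
    apply Ideal.subset_span
    exact ⟨mono_mem_msp.mpr ⟨m, hm, hmc⟩,
      isHomogeneous_monomial _ (by rw [← mdeg_eq_degree]; exact hdc)⟩

private lemma minGens_msp {S : Set (Fin n →₀ ℕ)} {j : ℕ} (hS : ∀ a ∈ S, mdeg a = j) :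
    minGens (msp (K := K) S) = S := by
  ext a
  constructor
  · rintro ⟨ha, hmin⟩
    obtain ⟨s, hs, hsa⟩ := mono_mem_msp.mp ha
    rcases eq_or_ne s a with rfl | hne
    · exact hs
    · exact absurd (mono_mem_msp.mpr ⟨s, hs, le_rfl⟩) (hmin s hsa hne)
  · intro ha
    refine ⟨mono_mem_msp.mpr ⟨a, ha, le_rfl⟩, ?_⟩
    intro b hba hbne hbI
    obtain ⟨s, hs, hsb⟩ := mono_mem_msp.mp hbI
    have hsa : s = a :=
      eq_of_le_of_mdeg_le (hsb.trans hba) (by rw [hS a ha, hS s hs])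
    exact hbne (le_antisymm hba (hsa ▸ hsb))

/-- The exponent set generating the gradient ideal. -/
private def gradSet (I : Ideal (MPoly K n)) : Set (Fin n →₀ ℕ) :=
  {c | ∃ a ∈ minGens I, ∃ i : Fin n, a i ≠ 0 ∧ c = a - Finsupp.single i 1}

private lemma gradIdeal_eq_msp (I : Ideal (MPoly K n)) : gradIdeal I = msp (gradSet I) := by
  unfold gradIdeal msp gradSet
  congr 1
  ext q
  simp only [Set.mem_setOf_eq, Set.mem_image]
  constructor
  · rintro ⟨a, ha, i, hi, rfl⟩
    exact ⟨a - Finsupp.single i 1, ⟨a, ha, i, hi, rfl⟩, rfl⟩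
  · rintro ⟨c, ⟨a, ha, i, hi, rfl⟩, rfl⟩
    exact ⟨a, ha, i, hi, rfl⟩

private lemma exists_minGen_aux (I : Ideal (MPoly K n)) :
    ∀ N : ℕ, ∀ b : Fin n →₀ ℕ, mdeg b ≤ N → (monomial b (1 : K) : MPoly K n) ∈ I →
      ∃ a ∈ minGens I, a ≤ b := by
  intro N
  induction N with
  | zero =>
    intro b hb hbI
    have hb0 : b = 0 := by
      ext i
      have := apply_le_mdeg b i
      simp only [Finsupp.coe_zero, Pi.zero_apply]
      omega
    subst hb0
    exact ⟨0, ⟨hbI, fun c hc hne _ => hne (le_antisymm hc (zero_le : (0 : Fin n →₀ ℕ) ≤ c))⟩, le_rfl⟩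
  | succ N IH =>
    intro b hb hbI
    by_cases hmin : b ∈ minGens I
    · exact ⟨b, hmin, le_rfl⟩
    · have hex : ∃ c, c ≤ b ∧ c ≠ b ∧ (monomial c (1 : K) : MPoly K n) ∈ I := by
        unfold minGens at hmin
        simp only [Set.mem_setOf_eq] at hmin
        push_neg at hmin
        obtain ⟨c, h1, h2, h3⟩ := hmin hbI
        exact ⟨c, h1, h2, h3⟩
      obtain ⟨c, h1, h2, h3⟩ := hex
      have hlt : mdeg c < mdeg b := by
        have hle := mdeg_mono' h1
        rcases lt_or_eq_of_le hle with h | h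
        · exact h
        · exact absurd (eq_of_le_of_mdeg_le h1 (le_of_eq h.symm)) h2
      exact (IH c (by omega) h3).imp fun a ⟨ha, hac⟩ => ⟨ha, hac.trans h1⟩

private lemma exists_minGen {I : Ideal (MPoly K n)} {b : Fin n →₀ ℕ}
    (hbI : (monomial b (1 : K) : MPoly K n) ∈ I) : ∃ a ∈ minGens I, a ≤ b :=
  exists_minGen_aux I (mdeg b) b le_rfl hbI

private lemma mono_mem_of_le {I : Ideal (MPoly K n)} {a c : Fin n →₀ ℕ} (h : a ≤ c)
    (ha : (monomial a (1 : K) : MPoly K n) ∈ I) :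
    (monomial c (1 : K) : MPoly K n) ∈ I := by
  have heq : (monomial c (1 : K) : MPoly K n) = monomial (c - a) 1 * monomial a 1 := by
    rw [monomial_mul, one_mul, tsub_add_cancel_of_le h]
  rw [heq]
  exact Ideal.mul_mem_left _ _ ha

/-- The set of exponents of degree-`j` monomials in `I`. -/
private def compSet (I : Ideal (MPoly K n)) (j : ℕ) : Set (Fin n →₀ ℕ) :=
  {b | mdeg b = j ∧ (monomial b (1 : K) : MPoly K n) ∈ I}

private lemma grad_comp_eq_shadow (I : Ideal (MPoly K n))
    (h1 : (monomial (0 : Fin n →₀ ℕ) (1 : K) : MPoly K n) ∉ I) (j : ℕ) :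
    {c : Fin n →₀ ℕ | mdeg c = j ∧ ∃ g ∈ gradSet I, g ≤ c} = shadow (compSet I (j + 1)) := by
  ext c
  simp only [Set.mem_setOf_eq, shadow, compSet, gradSet]
  constructor
  · rintro ⟨hdc, g, ⟨a, ha, k, hk, rfl⟩, hgc⟩
    by_cases hac : a ≤ c
    · refine ⟨c + Finsupp.single k 1, ⟨?_, ?_⟩, k, ?_, ?_⟩
      · rw [mdeg_add', mdeg_single', hdc]
      · exact mono_mem_of_le (hac.trans (le_add_of_nonneg_right zero_le)) ha.1
      · rw [Finsupp.add_apply, Finsupp.single_eq_same]; omega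
      · rw [add_tsub_cancel_right]
    · have hk' : ∀ s, s ≠ k → a s ≤ c s := by
        intro s hs
        have hh := Finsupp.le_def.mp hgc s
        rw [Finsupp.tsub_apply, Finsupp.single_eq_of_ne' (Ne.symm hs), Nat.sub_zero] at hh
        exact hh
      have hak2 : a k ≤ c k + 1 := by
        have hh := Finsupp.le_def.mp hgc k
        rw [Finsupp.tsub_apply, Finsupp.single_eq_same] at hh
        omega
      refine ⟨c + Finsupp.single k 1, ⟨?_, ?_⟩, k, ?_, ?_⟩
      · rw [mdeg_add', mdeg_single', hdc]
      · apply mono_mem_of_le _ ha.1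
        rw [Finsupp.le_def]; intro s
        rw [Finsupp.add_apply, Finsupp.single_apply]
        rcases eq_or_ne k s with rfl | h
        · rw [if_pos rfl]; omega
        · have := hk' s (Ne.symm h); rw [if_neg h]; omega
      · rw [Finsupp.add_apply, Finsupp.single_eq_same]; omega
      · rw [add_tsub_cancel_right]
  · rintro ⟨b, ⟨hdb, hbI⟩, p, hp, rfl⟩
    obtain ⟨a, ha, hab⟩ := exists_minGen hbI
    have ha0 : a ≠ 0 := by rintro rfl; exact h1 ha.1
    refine ⟨by have := mdeg_sub_single' hp; omega, ?_⟩
    by_cases hac : a ≤ b - Finsupp.single p 1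
    · obtain ⟨k, hk⟩ : ∃ k, a k ≠ 0 := by
        by_contra hno; push_neg at hno
        exact ha0 (Finsupp.ext fun i => hno i)
      exact ⟨a - Finsupp.single k 1, ⟨a, ha, k, hk, rfl⟩, tsub_le_self.trans hac⟩
    · have hbp : 1 ≤ b p := Nat.one_le_iff_ne_zero.mpr hp
      have hap : b p ≤ a p := by
        by_contra hno; push_neg at hno
        apply hac
        rw [Finsupp.le_def]; intro s
        rw [Finsupp.tsub_apply, Finsupp.single_apply]
        have has := Finsupp.le_def.mp hab s
        rcases eq_or_ne p s with rfl | h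
        · rw [if_pos rfl]; omega
        · rw [if_neg h]; omega
      refine ⟨a - Finsupp.single p 1, ⟨a, ha, p, by omega, rfl⟩, ?_⟩
      rw [Finsupp.le_def]; intro s
      rw [Finsupp.tsub_apply, Finsupp.tsub_apply]
      have := Finsupp.le_def.mp hab s
      omega

end Stmt13Aux2

/-- If `I` is componentwise polymatroidal then so is `∂(I)`. -/
theorem stmt13 {K : Type} [Field K] [CharZero K] {n : ℕ}
    (I : Ideal (MPoly K n)) (hI : IsMonomialIdeal I)
    (hcw : ∀ j : ℕ, IsPolymatroidal (componentIdeal I j)) :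
    ∀ j : ℕ, IsPolymatroidal (componentIdeal (gradIdeal I) j) := by
  intro j
  obtain ⟨M, hM⟩ := hI
  have hcomp : componentIdeal (gradIdeal I) j
      = msp {c : Fin n →₀ ℕ | mdeg c = j ∧ ∃ g ∈ gradSet I, g ≤ c} := by
    rw [gradIdeal_eq_msp, componentIdeal_msp]
  have hDdeg : ∀ c ∈ {c : Fin n →₀ ℕ | mdeg c = j ∧ ∃ g ∈ gradSet I, g ≤ c}, mdeg c = j :=
    fun c hc => hc.1
  have hmin : minGens (componentIdeal (gradIdeal I) j)
      = {c : Fin n →₀ ℕ | mdeg c = j ∧ ∃ g ∈ gradSet I, g ≤ c} := by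
    rw [hcomp]; exact minGens_msp hDdeg
  refine ⟨⟨_, hcomp⟩, ⟨j, by rw [hmin]; exact hDdeg⟩, ?_⟩
  rw [hmin]
  show Exch _
  by_cases h1 : (monomial (0 : Fin n →₀ ℕ) (1 : K) : MPoly K n) ∈ I
  · have hempty : gradSet I = ∅ := by
      ext c
      simp only [gradSet, Set.mem_setOf_eq, Set.mem_empty_iff_false, iff_false]
      rintro ⟨a, ha, i, hi, -⟩
      rcases eq_or_ne a 0 with rfl | hne
      · simp at hi
      · exact ha.2 0 (zero_le : (0 : Fin n →₀ ℕ) ≤ a) (Ne.symm hne) h1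
    rintro u ⟨-, g, hg, -⟩
    rw [hempty] at hg
    exact absurd hg (Set.notMem_empty g)
  · rw [grad_comp_eq_shadow I h1 j]
    have hBeq : compSet I (j + 1) = {c : Fin n →₀ ℕ | mdeg c = j + 1 ∧ ∃ m ∈ M, m ≤ c} := by
      ext c
      simp only [compSet, Set.mem_setOf_eq, and_congr_right_iff]
      intro _
      rw [hM]
      exact mono_mem_msp
    have hBmin : minGens (componentIdeal I (j + 1)) = compSet I (j + 1) := by
      conv_lhs => rw [hM]
      rw [componentIdeal_msp, minGens_msp (fun a ha => ha.1), hBeq]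
    have hexB : Exch (compSet I (j + 1)) := by
      rw [← hBmin]
      exact (hcw (j + 1)).2.2
    exact shadow_exch (fun b hb => hb.1) hexB
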